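/- arXiv:1912.03514 — 2 statements merged into one kernel-verified Lean document; each statement's English description precedes it below -/
import Mathlib

section
/- For ε ∈ (0,1), define φ(α) = max{1 − √α/√(1+ε), √α/√(1−ε) − 1} for α > 0. The minimum of φ over α > 0 equals ε/(1 + √(1−ε²)), and it is attained at α* = 4(1−ε²)/(√(1+ε) + √(1−ε))². -/
/-- the worst-case contraction factor
`φ(α) = max {1 − √α/√(1+ε), √α/√(1−ε) − 1}` attains its minimum over `α > 0` at
`α* = 4(1−ε²)/(√(1+ε)+√(1−ε))²`, with minimal value `ε/(1 + √(1−ε²))`. -/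
theorem stmt7 (ε : ℝ) (hε : ε ∈ Set.Ioo (0:ℝ) 1)
    (φ : ℝ → ℝ)
    (hφ : φ = fun α => max (1 - Real.sqrt α / Real.sqrt (1 + ε))
      (Real.sqrt α / Real.sqrt (1 - ε) - 1))
    (αs : ℝ)
    (hαs : αs = 4 * (1 - ε ^ 2) / (Real.sqrt (1 + ε) + Real.sqrt (1 - ε)) ^ 2) :
    φ αs = ε / (1 + Real.sqrt (1 - ε ^ 2)) ∧ ∀ α > 0, φ αs ≤ φ α := by
  obtain ⟨hε0, hε1⟩ := hε
  set a := Real.sqrt (1 + ε) with ha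
  set b := Real.sqrt (1 - ε) with hb
  have ha2 : a ^ 2 = 1 + ε := Real.sq_sqrt (by linarith)
  have hb2 : b ^ 2 = 1 - ε := Real.sq_sqrt (by linarith)
  have hapos : 0 < a := Real.sqrt_pos.mpr (by linarith)
  have hbpos : 0 < b := Real.sqrt_pos.mpr (by linarith)
  have hba : b < a := by nlinarith
  have habpos : 0 < a + b := by linarith
  have hprod : a * b = Real.sqrt (1 - ε ^ 2) := by
    rw [ha, hb, ← Real.sqrt_mul (by linarith)]
    congr 1; ring
  have hαs_sq : αs = (2 * a * b / (a + b)) ^ 2 := by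
    rw [hαs]
    field_simp
    nlinarith [ha2, hb2]
  have hsq : Real.sqrt αs = 2 * a * b / (a + b) := by
    rw [hαs_sq, Real.sqrt_sq (by positivity)]
  have hL : 1 - Real.sqrt αs / a = (a - b) / (a + b) := by
    rw [hsq]; field_simp; ring
  have hR : Real.sqrt αs / b - 1 = (a - b) / (a + b) := by
    rw [hsq]; field_simp; ring
  have hφαs : φ αs = (a - b) / (a + b) := by
    rw [hφ]; simp only [← ha, ← hb, hL, hR, max_self]
  constructor
  · rw [hφαs, ← hprod]
    rw [div_eq_div_iff habpos.ne' (by positivity)]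
    nlinarith [ha2, hb2]
  · intro α hα
    rw [hφαs, hφ]
    simp only [← ha, ← hb]
    rcases le_or_gt (Real.sqrt α) (2 * a * b / (a + b)) with h | h
    · refine le_trans ?_ (le_max_left _ _)
      rw [← hL, hsq]
      gcongr
    · refine le_trans ?_ (le_max_right _ _)
      rw [← hR, hsq]
      gcongr
end

section
/- Suppose M is a d×d symmetric positive definite matrix with ‖M − I_d‖₂ ≤ ε for ε ∈ (0,1), and consider the heavy-ball iteration y^{i+1} = y^i − α M^{-1}(y^i − y*) + β(y^i − y^{i-1}) with β = β* = (ε/(1+√(1−ε²)))² and α = α* = (1−β*)√(1−ε²). Then the eigenvalue condition β* ≥ (1 − √(α* μ))² holds for every eigenvalue μ of M^{-1}. -/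
open scoped Matrix.Norms.L2Operator

/-!
Every eigenvalue `λ = μ⁻¹` of `M` lies within `ε` of `1`, because `‖M - 1‖ ≤ ε` bounds the
spectrum of `M - 1`. Write `ε = sin θ`, `s = √(1 - ε²) = cos θ`; then `b = ε / (1 + s) = tan (θ/2)`,
`β* = b²`, and `α* = (1 - b²) s` satisfies `α* = (1 + ε) (1 - b)² = (1 - ε) (1 + b)²`.
Hence `λ ∈ [1 - ε, 1 + ε]` gives `α* / λ ∈ [(1 - b)², (1 + b)²]`, i.e. `|1 - √(α* μ)| ≤ b`.
-/

theorem norm_sub_one_le_of_mem_spectrum {𝕜 A : Type*} [NormedField 𝕜] [NormedRing A]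
    [NormedAlgebra 𝕜 A] [CompleteSpace A] [NormOneClass A] {a : A} {k : 𝕜}
    (hk : k ∈ spectrum 𝕜 a) : ‖k - 1‖ ≤ ‖a - 1‖ := by
  refine spectrum.norm_le_norm_of_mem ?_
  rw [← map_one (algebraMap 𝕜 A), ← spectrum.sub_singleton_eq]
  exact Set.sub_mem_sub hk rfl

theorem isUnit_of_norm_sub_one_lt_one {A : Type*} [NormedRing A] [HasSummableGeomSeries A]
    {a : A} (ha : ‖a - 1‖ < 1) : IsUnit a := by
  simpa using isUnit_one_sub_of_norm_lt_one (x := 1 - a) (by rwa [norm_sub_rev])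

theorem norm_inv_sub_one_le_of_mem_spectrum_ringInverse {𝕜 A : Type*} [NormedField 𝕜]
    [NormedRing A] [NormedAlgebra 𝕜 A] [CompleteSpace A] [NormOneClass A] {a : A}
    (ha : ‖a - 1‖ < 1) {μ : 𝕜} (hμ : μ ∈ spectrum 𝕜 (Ring.inverse a)) :
    ‖μ⁻¹ - 1‖ ≤ ‖a - 1‖ := by
  obtain ⟨u, rfl⟩ := isUnit_of_norm_sub_one_lt_one ha
  rw [Ring.inverse_unit] at hμ
  exact norm_sub_one_le_of_mem_spectrum (spectrum.inv₀_mem_iff.mpr hμ)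

theorem Matrix.norm_inv_sub_one_le_of_mem_spectrum_inv {n 𝕜 : Type*} [Fintype n]
    [DecidableEq n] [RCLike 𝕜] {M : Matrix n n 𝕜} (hM : ‖M - 1‖ < 1) {μ : 𝕜}
    (hμ : μ ∈ spectrum 𝕜 M⁻¹) : ‖μ⁻¹ - 1‖ ≤ ‖M - 1‖ := by
  cases isEmpty_or_nonempty n
  · simp [spectrum.of_subsingleton] at hμ
  · rw [nonsing_inv_eq_ringInverse] at hμ
    exact norm_inv_sub_one_le_of_mem_spectrum_ringInverse hM hμ

section HalfAngle

variable {ε s : ℝ}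

theorem one_sub_sq_half_angle_mul_eq_left (hs : s ^ 2 + ε ^ 2 = 1) (hs0 : 0 ≤ s) :
    (1 - (ε / (1 + s)) ^ 2) * s = (1 + ε) * (1 - ε / (1 + s)) ^ 2 := by
  have : 1 + s ≠ 0 := by positivity
  field_simp
  linear_combination (1 + s - ε) * hs

theorem one_sub_sq_half_angle_mul_eq_right (hs : s ^ 2 + ε ^ 2 = 1) (hs0 : 0 ≤ s) :
    (1 - (ε / (1 + s)) ^ 2) * s = (1 - ε) * (1 + ε / (1 + s)) ^ 2 := by
  have : 1 + s ≠ 0 := by positivity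
  field_simp
  linear_combination (1 + s + ε) * hs

end HalfAngle

theorem sq_one_sub_sqrt_le_sq {b x : ℝ} (hlo : (1 - b) ^ 2 ≤ x) (hhi : x ≤ (1 + b) ^ 2) :
    (1 - √x) ^ 2 ≤ b ^ 2 := by
  have hb : 0 ≤ b := by nlinarith
  have hsqrt_lo : 1 - b ≤ √x := (le_abs_self _).trans (Real.abs_le_sqrt hlo)
  have hsqrt_hi : √x ≤ 1 + b := Real.sqrt_le_iff.mpr ⟨by linarith, hhi⟩
  exact sq_le_sq' (by linarith) (by linarith)

theorem heavyBall_underdamped {ε s l : ℝ} (hs : s ^ 2 + ε ^ 2 = 1) (hs0 : 0 ≤ s)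
    (hε : ε < 1) (hl : |l - 1| ≤ ε) :
    (1 - √((1 - (ε / (1 + s)) ^ 2) * s * l⁻¹)) ^ 2 ≤ (ε / (1 + s)) ^ 2 := by
  obtain ⟨hl_lo, hl_hi⟩ := abs_le.mp hl
  have hl0 : 0 < l := by linarith
  have hlo : (1 - ε) * l⁻¹ ≤ 1 := by
    rw [← div_eq_mul_inv, div_le_one hl0]; linarith
  have hhi : 1 ≤ (1 + ε) * l⁻¹ := by
    rw [← div_eq_mul_inv, one_le_div hl0]; linarith
  apply sq_one_sub_sqrt_le_sq
  · rw [one_sub_sq_half_angle_mul_eq_left hs hs0]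
    nlinarith [sq_nonneg (1 - ε / (1 + s))]
  · rw [one_sub_sq_half_angle_mul_eq_right hs hs0]
    nlinarith [sq_nonneg (1 + ε / (1 + s))]

theorem stmt12_general {d : ℕ} (M : Matrix (Fin d) (Fin d) ℝ) (ε : ℝ)
    (hε : ε ∈ Set.Ioo (0:ℝ) 1)
    (hnorm : ‖M - 1‖ ≤ ε)
    (βs αs : ℝ)
    (hβs : βs = (ε / (1 + Real.sqrt (1 - ε ^ 2))) ^ 2)
    (hαs : αs = (1 - βs) * Real.sqrt (1 - ε ^ 2)) :
    ∀ μ ∈ spectrum ℝ M⁻¹, (1 - Real.sqrt (αs * μ)) ^ 2 ≤ βs := by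
  intro μ hμ
  have hs : √(1 - ε ^ 2) ^ 2 + ε ^ 2 = 1 := by
    rw [Real.sq_sqrt (by nlinarith [hε.1, hε.2])]; ring
  have hl : |μ⁻¹ - 1| ≤ ε :=
    (M.norm_inv_sub_one_le_of_mem_spectrum_inv (hnorm.trans_lt hε.2) hμ).trans hnorm
  subst hαs hβs
  rw [← inv_inv μ]
  exact heavyBall_underdamped hs (Real.sqrt_nonneg _) hε.2 hl

/-- with `‖M − I‖₂ ≤ ε` and the optimal momentum parameters `β*, α*`, the
under-damping condition `β* ≥ (1 − √(α* μ))²` holds for every eigenvalue `μ` of `M⁻¹`. -/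
theorem stmt12 {d : ℕ} (M : Matrix (Fin d) (Fin d) ℝ) (ε : ℝ)
    (hε : ε ∈ Set.Ioo (0:ℝ) 1) (hsym : M.IsHermitian) (hpd : M.PosDef)
    (hnorm : ‖M - 1‖ ≤ ε)
    (βs αs : ℝ)
    (hβs : βs = (ε / (1 + Real.sqrt (1 - ε ^ 2))) ^ 2)
    (hαs : αs = (1 - βs) * Real.sqrt (1 - ε ^ 2)) :
    ∀ μ ∈ spectrum ℝ M⁻¹, (1 - Real.sqrt (αs * μ)) ^ 2 ≤ βs :=
  stmt12_general M ε hε hnorm βs αs hβs hαs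
end
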